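/- Let α > 1 be a real number, n ≥ 2 an integer, and let G be a finite simple graph on n vertices with at least one edge. If H_α(G) = 0, then G is isomorphic to the disjoint union K₂ ∪̇ K̄_{n−2} of a single edge and n−2 isolated vertices; equivalently, the only graph on n vertices attaining the minimum Rényi α-entropy 0 is K₂ ∪̇ K̄_{n−2}. -/

import Mathlib

open Matrix Real Finset

namespace VNE

variable {V : Type*} [Fintype V] [DecidableEq V]

/-- The density matrix `ρ(G) = L(G) / tr (L(G))` of a graph. -/
noncomputable def rho (G : SimpleGraph V) : Matrix V V ℝ :=
  letI := Classical.decRel G.Adj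
  ((G.lapMatrix ℝ).trace)⁻¹ • G.lapMatrix ℝ

lemma rho_isHermitian (G : SimpleGraph V) : (rho G).IsHermitian := by
  letI := Classical.decRel G.Adj
  have h : (G.lapMatrix ℝ).IsHermitian := (SimpleGraph.posSemidef_lapMatrix ℝ G).1
  unfold rho
  unfold Matrix.IsHermitian at h ⊢
  rw [Matrix.conjTranspose_smul, h, star_trivial]

/-- The eigenvalues of the density matrix of `G`. -/
noncomputable def eigs (G : SimpleGraph V) : V → ℝ :=
  (rho_isHermitian G).eigenvalues

/-- The von Neumann entropy of a graph. -/
noncomputable def vnEntropy (G : SimpleGraph V) : ℝ :=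
  ∑ v, -(eigs G v * Real.logb 2 (eigs G v))

/-- The Rényi α-entropy of a graph. -/
noncomputable def renyiEntropy (α : ℝ) (G : SimpleGraph V) : ℝ :=
  (1 / (1 - α)) * Real.logb 2 (∑ v, eigs G v ^ α)

/-- The Rényi 2-entropy of a graph, `−log₂ tr(ρ(G)²)`. -/
noncomputable def renyi2 (G : SimpleGraph V) : ℝ :=
  - Real.logb 2 ((rho G * rho G).trace)

/-- `tr₂(G) = tr(ρ(G)²)`. -/
noncomputable def tr2 (G : SimpleGraph V) : ℝ :=
  (rho G * rho G).trace

/-- The degree of a vertex, as a real number. -/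
noncomputable def deg (G : SimpleGraph V) (v : V) : ℝ :=
  letI := Classical.decRel G.Adj
  (G.degree v : ℝ)

/-- The degree sum `d_G` of a graph. -/
noncomputable def degSum (G : SimpleGraph V) : ℝ :=
  ∑ v, deg G v

/-- The star `K_{1,n-1}` on `n` vertices, with center the vertex `0`. -/
def starOn (n : ℕ) : SimpleGraph (Fin n) where
  Adj x y := x ≠ y ∧ (x.val = 0 ∨ y.val = 0)
  symm := ⟨fun _ _ h => ⟨h.1.symm, h.2.symm⟩⟩
  loopless := ⟨fun _ h => h.1 rfl⟩

/-- The graph `K₂ ∪̇ K̄_{n-2}` on `n` vertices: one edge joining the vertices `0` and `1`,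
together with `n - 2` isolated vertices. -/
def singleEdgeGraph (n : ℕ) : SimpleGraph (Fin n) where
  Adj x y := x ≠ y ∧ x.val < 2 ∧ y.val < 2
  symm := ⟨fun _ _ h => ⟨h.1.symm, h.2.2, h.2.1⟩⟩
  loopless := ⟨fun _ h => h.1 rfl⟩

section AuxLemmas

variable {V : Type*} [Fintype V] [DecidableEq V]

lemma lap_apply' (G : SimpleGraph V) [DecidableRel G.Adj] (i j : V) :
    G.lapMatrix ℝ i j =
      (if i = j then (G.degree i : ℝ) else 0) - (if G.Adj i j then 1 else 0) := by
  simp [SimpleGraph.lapMatrix, SimpleGraph.degMatrix, Matrix.diagonal_apply, Matrix.sub_apply]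

lemma trace_lap' (G : SimpleGraph V) [DecidableRel G.Adj] :
    (G.lapMatrix ℝ).trace = ∑ v, (G.degree v : ℝ) := by
  rw [SimpleGraph.lapMatrix, Matrix.trace_sub, SimpleGraph.trace_adjMatrix, sub_zero,
    SimpleGraph.degMatrix, Matrix.trace_diagonal]

lemma sum_eigs_eq_one (G : SimpleGraph V) (ht : (letI := Classical.decRel G.Adj;
    (G.lapMatrix ℝ).trace) ≠ 0) : ∑ v, eigs G v = 1 := by
  letI := Classical.decRel G.Adj
  have hH := rho_isHermitian G
  have hU : (star (hH.eigenvectorUnitary : Matrix V V ℝ)) *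
      (hH.eigenvectorUnitary : Matrix V V ℝ) = 1 :=
    Unitary.coe_star_mul_self hH.eigenvectorUnitary
  have h1 : (rho G).trace = ∑ v, eigs G v := by
    conv_lhs => rw [hH.spectral_theorem]
    change ((hH.eigenvectorUnitary : Matrix V V ℝ) * _ *
      star (hH.eigenvectorUnitary : Matrix V V ℝ)).trace = _
    rw [Matrix.trace_mul_comm, ← mul_assoc, hU, one_mul, Matrix.trace_diagonal]
    simp [eigs]
  have h2 : (rho G).trace = 1 := by
    unfold rho
    rw [Matrix.trace_smul, smul_eq_mul, inv_mul_cancel₀ ht]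
  rw [← h1, h2]

lemma eigs_nonneg (G : SimpleGraph V) (ht : 0 ≤ (letI := Classical.decRel G.Adj;
    (G.lapMatrix ℝ).trace)) (v : V) : 0 ≤ eigs G v := by
  letI := Classical.decRel G.Adj
  have hpsd : (rho G).PosSemidef := by
    refine ⟨rho_isHermitian G, fun x => ?_⟩
    unfold rho
    exact ((SimpleGraph.posSemidef_lapMatrix ℝ G).smul (inv_nonneg.mpr ht)).2 x
  exact hpsd.eigenvalues_nonneg v

end AuxLemmas

theorem renyi_eq_zero_unique {n : ℕ} (hn : 2 ≤ n) (α : ℝ) (hα : 1 < α)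
    (G : SimpleGraph (Fin n)) (hG : G.edgeSet.Nonempty)
    (h : renyiEntropy α G = 0) :
    Nonempty (G ≃g singleEdgeGraph n) := by
  letI := Classical.decRel G.Adj
  obtain ⟨u, v, huv⟩ : ∃ u v, G.Adj u v := by
    obtain ⟨e, he⟩ := hG
    induction e using Sym2.ind with
    | _ a b => exact ⟨a, b, he⟩
  have huv_ne : u ≠ v := G.ne_of_adj huv
  set t : ℝ := (G.lapMatrix ℝ).trace with ht_def
  have htrace : t = ∑ w, (G.degree w : ℝ) := trace_lap' G
  have hdu_pos : 0 < G.degree u := (G.degree_pos_iff_exists_adj u).mpr ⟨v, huv⟩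
  have hdv_pos : 0 < G.degree v := (G.degree_pos_iff_exists_adj v).mpr ⟨u, huv.symm⟩
  have htpos : 0 < t := by
    rw [htrace]
    exact Finset.sum_pos' (fun i _ => Nat.cast_nonneg _)
      ⟨u, Finset.mem_univ u, by exact_mod_cast hdu_pos⟩
  -- eigenvalue facts
  have hnn : ∀ w, 0 ≤ eigs G w := eigs_nonneg G htpos.le
  have hsum : ∑ w, eigs G w = 1 := sum_eigs_eq_one G htpos.ne'
  -- entropy condition gives ∑ λ^α = 1
  have hS1 : ∑ w, eigs G w ^ α = 1 := by
    have hcoef : (1 : ℝ) / (1 - α) ≠ 0 := by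
      apply one_div_ne_zero; intro hc; linarith
    have hlog : Real.logb 2 (∑ w, eigs G w ^ α) = 0 := by
      unfold renyiEntropy at h
      rcases mul_eq_zero.mp h with h' | h'
      · exact absurd h' hcoef
      · exact h'
    have hSpos : 0 < ∑ w, eigs G w ^ α := by
      obtain ⟨w, _, hw⟩ := Finset.exists_ne_zero_of_sum_ne_zero (by rw [hsum]; norm_num :
        ∑ w, eigs G w ≠ 0)
      have hwpos : 0 < eigs G w := lt_of_le_of_ne (hnn w) (Ne.symm hw)
      exact Finset.sum_pos' (fun i _ => Real.rpow_nonneg (hnn i) α)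
        ⟨w, Finset.mem_univ w, Real.rpow_pos_of_pos hwpos α⟩
    exact Real.eq_one_of_pos_of_logb_eq_zero (by norm_num : (1:ℝ) < 2) hSpos hlog
  -- each eigenvalue is 0 or 1
  have hle1 : ∀ w, eigs G w ≤ 1 := by
    intro w
    calc eigs G w ≤ ∑ i, eigs G i := Finset.single_le_sum (fun i _ => hnn i) (Finset.mem_univ w)
    _ = 1 := hsum
  have key : ∀ w, eigs G w = 0 ∨ eigs G w = 1 := by
    have hterm : ∀ w ∈ Finset.univ (α := Fin n), eigs G w ^ α ≤ eigs G w := by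
      intro w _
      rcases eq_or_lt_of_le (hnn w) with h0 | h0
      · rw [← h0, Real.zero_rpow (by linarith : α ≠ 0)]
      · calc eigs G w ^ α ≤ eigs G w ^ (1:ℝ) :=
            Real.rpow_le_rpow_of_exponent_ge h0 (hle1 w) hα.le
        _ = eigs G w := Real.rpow_one _
    have hzero : ∀ w ∈ Finset.univ (α := Fin n), eigs G w - eigs G w ^ α = 0 := by
      apply (Finset.sum_eq_zero_iff_of_nonneg (fun w hw => sub_nonneg.mpr (hterm w hw))).mp
      rw [Finset.sum_sub_distrib, hsum, hS1, sub_self]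
    intro w
    have heq : eigs G w ^ α = eigs G w := by
      have := hzero w (Finset.mem_univ w); linarith
    rcases eq_or_lt_of_le (hnn w) with h0 | h0
    · exact Or.inl h0.symm
    rcases eq_or_lt_of_le (hle1 w) with h1 | h1
    · exact Or.inr h1
    · exfalso
      have : eigs G w ^ α < eigs G w ^ (1:ℝ) :=
        Real.rpow_lt_rpow_of_exponent_gt h0 h1 hα
      rw [Real.rpow_one] at this; linarith
  -- rho is idempotent
  have hidem : rho G * rho G = rho G := by
    have hH := rho_isHermitian G
    set U : Matrix (Fin n) (Fin n) ℝ := (hH.eigenvectorUnitary : Matrix (Fin n) (Fin n) ℝ)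
      with hU_def
    set D : Matrix (Fin n) (Fin n) ℝ :=
      Matrix.diagonal (RCLike.ofReal ∘ hH.eigenvalues) with hD_def
    have hUs : star U * U = 1 := Unitary.coe_star_mul_self hH.eigenvectorUnitary
    have hDD : D * D = D := by
      rw [hD_def, Matrix.diagonal_mul_diagonal]
      apply congrArg Matrix.diagonal
      funext w
      have hkw : hH.eigenvalues w = 0 ∨ hH.eigenvalues w = 1 := key w
      rcases hkw with hk | hk <;> simp [Function.comp, hk]
    have hst : rho G = U * D * star U := hH.spectral_theorem
    rw [hst]
    calc U * D * star U * (U * D * star U)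
        = U * (D * ((star U * U) * (D * star U))) := by simp only [Matrix.mul_assoc]
    _ = U * (D * (D * star U)) := by rw [hUs, Matrix.one_mul]
    _ = U * ((D * D) * star U) := by rw [Matrix.mul_assoc]
    _ = U * (D * star U) := by rw [hDD]
    _ = U * D * star U := by rw [Matrix.mul_assoc]
  -- L² = t • L
  have hLL : G.lapMatrix ℝ * G.lapMatrix ℝ = t • G.lapMatrix ℝ := by
    have h1 : rho G = t⁻¹ • G.lapMatrix ℝ := rfl
    rw [h1, Matrix.smul_mul, Matrix.mul_smul, smul_smul] at hidem
    have h2 := congrArg (fun M : Matrix (Fin n) (Fin n) ℝ => (t * t) • M) hidem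
    simp only [smul_smul] at h2
    have e1 : t * t * (t⁻¹ * t⁻¹) = 1 := by field_simp
    have e2 : t * t * t⁻¹ = t := by field_simp
    rwa [e1, e2, one_smul] at h2
  -- diagonal equation : d² + d = t d
  have hdiag : ∀ i : Fin n, ((G.degree i : ℝ))^2 + (G.degree i : ℝ) = t * (G.degree i : ℝ) := by
    intro i
    have h0 : (G.lapMatrix ℝ * G.lapMatrix ℝ) i i = (t • G.lapMatrix ℝ) i i := by rw [hLL]
    rw [Matrix.mul_apply, Matrix.smul_apply, smul_eq_mul] at h0
    have hL : ∀ j, G.lapMatrix ℝ i j * G.lapMatrix ℝ j i =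
        (if i = j then ((G.degree i : ℝ))^2 else 0) + (if G.Adj i j then 1 else 0) := by
      intro j
      by_cases hij : i = j
      · subst hij
        simp [lap_apply', G.irrefl]
        ring
      · by_cases hadj : G.Adj i j
        · simp [lap_apply', hij, Ne.symm hij, hadj, hadj.symm]
        · simp [lap_apply', hij, Ne.symm hij, hadj, fun h => hadj (G.adj_symm h)]
    rw [Finset.sum_congr rfl (fun j _ => hL j), Finset.sum_add_distrib,
      Finset.sum_ite_eq (Finset.univ) i (fun _ => ((G.degree i : ℝ))^2), if_pos (Finset.mem_univ i),
      ← G.degree_eq_sum_if_adj i] at h0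
    rw [lap_apply', if_pos rfl, if_neg (G.irrefl), sub_zero] at h0
    linarith
  -- degrees are 0 or t - 1
  have hdeg : ∀ i : Fin n, (G.degree i : ℝ) = 0 ∨ (G.degree i : ℝ) = t - 1 := by
    intro i
    have hfac : (G.degree i : ℝ) * ((G.degree i : ℝ) + 1 - t) = 0 := by
      linear_combination hdiag i
    rcases mul_eq_zero.mp hfac with h' | h'
    · exact Or.inl h'
    · exact Or.inr (by linarith)
  have hdu : (G.degree u : ℝ) = t - 1 := by
    rcases hdeg u with h' | h'
    · exfalso; rw [Nat.cast_eq_zero] at h'; omega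
    · exact h'
  have hdv : (G.degree v : ℝ) = t - 1 := by
    rcases hdeg v with h' | h'
    · exfalso; rw [Nat.cast_eq_zero] at h'; omega
    · exact h'
  have ht2 : t = 2 := by
    have hge : 2 ≤ t := by
      have : (1 : ℝ) ≤ (G.degree u : ℝ) := by exact_mod_cast hdu_pos
      linarith [hdu]
    have hle : (G.degree u : ℝ) + (G.degree v : ℝ) ≤ t := by
      rw [htrace]
      have hsub : ({u, v} : Finset (Fin n)) ⊆ Finset.univ := Finset.subset_univ _
      calc (G.degree u : ℝ) + (G.degree v : ℝ)
          = ∑ w ∈ ({u, v} : Finset (Fin n)), (G.degree w : ℝ) := by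
            rw [Finset.sum_pair huv_ne]
      _ ≤ ∑ w, (G.degree w : ℝ) :=
            Finset.sum_le_sum_of_subset_of_nonneg hsub (fun i _ _ => Nat.cast_nonneg _)
    rw [hdu, hdv] at hle
    linarith
  have hdu1 : G.degree u = 1 := by
    have : (G.degree u : ℝ) = 1 := by rw [hdu, ht2]; norm_num
    exact_mod_cast this
  have hdv1 : G.degree v = 1 := by
    have : (G.degree v : ℝ) = 1 := by rw [hdv, ht2]; norm_num
    exact_mod_cast this
  -- all other degrees are zero
  have hdw : ∀ w : Fin n, w ≠ u → w ≠ v → G.degree w = 0 := by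
    intro w hwu hwv
    have hle : (G.degree w : ℝ) + ((G.degree u : ℝ) + (G.degree v : ℝ)) ≤ t := by
      rw [htrace]
      have hw_not : w ∉ ({u, v} : Finset (Fin n)) := by
        simp [hwu, hwv]
      calc (G.degree w : ℝ) + ((G.degree u : ℝ) + (G.degree v : ℝ))
          = ∑ x ∈ insert w ({u, v} : Finset (Fin n)), (G.degree x : ℝ) := by
            rw [Finset.sum_insert hw_not, Finset.sum_pair huv_ne]
      _ ≤ ∑ x, (G.degree x : ℝ) :=
            Finset.sum_le_sum_of_subset_of_nonneg (Finset.subset_univ _)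
              (fun i _ _ => Nat.cast_nonneg _)
    rw [hdu, hdv, ht2] at hle
    have h0 : (G.degree w : ℝ) ≤ 0 := by linarith
    have : (G.degree w : ℝ) = 0 := le_antisymm h0 (Nat.cast_nonneg _)
    exact_mod_cast this
  -- characterize adjacency
  have hadj_iff : ∀ x y : Fin n, G.Adj x y ↔ ((x = u ∧ y = v) ∨ (x = v ∧ y = u)) := by
    intro x y
    constructor
    · intro hxy
      have hx : x = u ∨ x = v := by
        by_contra hc
        push_neg at hc
        have h1 : 0 < G.degree x := (G.degree_pos_iff_exists_adj x).mpr ⟨y, hxy⟩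
        have h2 := hdw x hc.1 hc.2
        omega
      have hy : y = u ∨ y = v := by
        by_contra hc
        push_neg at hc
        have h1 : 0 < G.degree y := (G.degree_pos_iff_exists_adj y).mpr ⟨x, hxy.symm⟩
        have h2 := hdw y hc.1 hc.2
        omega
      have hxy_ne : x ≠ y := G.ne_of_adj hxy
      rcases hx with rfl | rfl <;> rcases hy with rfl | rfl
      · exact absurd rfl hxy_ne
      · exact Or.inl ⟨rfl, rfl⟩
      · exact Or.inr ⟨rfl, rfl⟩
      · exact absurd rfl hxy_ne
    · rintro (⟨rfl, rfl⟩ | ⟨rfl, rfl⟩)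
      · exact huv
      · exact huv.symm
  -- build the isomorphism
  have hn0 : 0 < n := by omega
  have hn1 : 1 < n := by omega
  set z : Fin n := ⟨0, hn0⟩ with hz_def
  set o : Fin n := ⟨1, hn1⟩ with ho_def
  have hzo : z ≠ o := by simp [hz_def, ho_def, Fin.ext_iff]
  set e₁ : Equiv.Perm (Fin n) := Equiv.swap u z with he₁_def
  set v' : Fin n := e₁ v with hv'_def
  have hv'z : v' ≠ z := by
    rw [hv'_def, he₁_def]
    rcases eq_or_ne v z with rfl | hvz
    · rw [Equiv.swap_apply_right]
      intro hc; exact huv_ne (hc ▸ rfl)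
    · rw [Equiv.swap_apply_of_ne_of_ne (Ne.symm huv_ne) hvz]
      exact hvz
  set e : Equiv.Perm (Fin n) := e₁.trans (Equiv.swap v' o) with he_def
  have heu : e u = z := by
    rw [he_def]
    simp only [Equiv.trans_apply, he₁_def, Equiv.swap_apply_left]
    rw [Equiv.swap_apply_of_ne_of_ne (Ne.symm hv'z) hzo]
  have hev : e v = o := by
    rw [he_def]
    simp only [Equiv.trans_apply, ← hv'_def, Equiv.swap_apply_left]
  have hsingle : ∀ a b : Fin n, (singleEdgeGraph n).Adj a b ↔
      ((a = z ∧ b = o) ∨ (a = o ∧ b = z)) := by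
    intro a b
    constructor
    · rintro ⟨hne, ha, hb⟩
      have ha' : a = z ∨ a = o := by
        have : a.val = 0 ∨ a.val = 1 := by omega
        rcases this with h' | h'
        · exact Or.inl (Fin.ext h')
        · exact Or.inr (Fin.ext h')
      have hb' : b = z ∨ b = o := by
        have : b.val = 0 ∨ b.val = 1 := by omega
        rcases this with h' | h'
        · exact Or.inl (Fin.ext h')
        · exact Or.inr (Fin.ext h')
      rcases ha' with rfl | rfl <;> rcases hb' with rfl | rfl
      · exact absurd rfl hne
      · exact Or.inl ⟨rfl, rfl⟩
      · exact Or.inr ⟨rfl, rfl⟩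
      · exact absurd rfl hne
    · rintro (⟨rfl, rfl⟩ | ⟨rfl, rfl⟩)
      · exact ⟨hzo, by simp [hz_def, ho_def]⟩
      · exact ⟨Ne.symm hzo, by simp [hz_def, ho_def]⟩
  refine ⟨⟨e, ?_⟩⟩
  intro a b
  rw [hsingle, hadj_iff]
  constructor
  · rintro (⟨h1, h2⟩ | ⟨h1, h2⟩)
    · exact Or.inl ⟨e.injective (h1.trans heu.symm), e.injective (h2.trans hev.symm)⟩
    · exact Or.inr ⟨e.injective (h1.trans hev.symm), e.injective (h2.trans heu.symm)⟩
  · rintro (⟨rfl, rfl⟩ | ⟨rfl, rfl⟩)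
    · exact Or.inl ⟨heu, hev⟩
    · exact Or.inr ⟨hev, heu⟩


end VNE
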